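/- For the prospect-theoretic operator $F_{i,v}(x) = k(i,v) + \alpha \sum_j p(j|i,v)\, u(\max_w x_{j,w})$ with $u$ Lipschitz with constant $L_u$, the map $F$ is Lipschitz in the sup norm with constant $\alpha L_u$; in particular, if $L_u < 1/\alpha$, $F$ is a contraction and has a unique fixed point in $\mathbb{R}^{sr}$. -/

import Mathlib

/-!
Taking a maximum over finitely many actions is 1-Lipschitz for the sup norm, `u` multiplies
distances by at most `Lu`, and averaging against the probability vector `p i v` does not increase
them; so `F` is `α * Lu`-Lipschitz, and Banach's fixed point theorem applies when `α * Lu < 1`.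
-/

open Finset

lemma ciSup_le_ciSup_add_of_forall_le {ι : Type*} [Finite ι] [Nonempty ι] {f g : ι → ℝ} {C : ℝ}
    (h : ∀ i, f i ≤ g i + C) : ⨆ i, f i ≤ (⨆ i, g i) + C :=
  ciSup_le fun i => (h i).trans (add_le_add_left (le_ciSup (Finite.bddAbove_range g) i) C)

lemma abs_ciSup_sub_ciSup_le {ι : Type*} [Finite ι] [Nonempty ι] {f g : ι → ℝ} {C : ℝ}
    (h : ∀ i, |f i - g i| ≤ C) : |(⨆ i, f i) - ⨆ i, g i| ≤ C := by
  have hfg : ⨆ i, f i ≤ (⨆ i, g i) + C :=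
    ciSup_le_ciSup_add_of_forall_le fun i => by linarith [(abs_sub_le_iff.1 (h i)).1]
  have hgf : ⨆ i, g i ≤ (⨆ i, f i) + C :=
    ciSup_le_ciSup_add_of_forall_le fun i => by linarith [(abs_sub_le_iff.1 (h i)).2]
  exact abs_sub_le_iff.2 ⟨by linarith, by linarith⟩

lemma abs_ciSup_apply_sub_ciSup_apply_le_norm {S A : Type*} [Fintype S] [Fintype A] [Nonempty A]
    (x y : S × A → ℝ) (j : S) : |(⨆ w, x (j, w)) - ⨆ w, y (j, w)| ≤ ‖x - y‖ :=
  abs_ciSup_sub_ciSup_le fun w => norm_le_pi_norm (x - y) (j, w)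

lemma abs_sum_mul_sub_sum_mul_le {ι : Type*} (s : Finset ι) {p a b : ι → ℝ} {C : ℝ}
    (hp : ∀ i ∈ s, 0 ≤ p i) (hp_sum : ∑ i ∈ s, p i = 1) (h : ∀ i ∈ s, |a i - b i| ≤ C) :
    |∑ i ∈ s, p i * a i - ∑ i ∈ s, p i * b i| ≤ C :=
  calc |∑ i ∈ s, p i * a i - ∑ i ∈ s, p i * b i|
      = |∑ i ∈ s, p i * (a i - b i)| := by simp only [mul_sub, sum_sub_distrib]
    _ ≤ ∑ i ∈ s, |p i * (a i - b i)| := abs_sum_le_sum_abs _ _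
    _ ≤ ∑ i ∈ s, p i * C := sum_le_sum fun i hi => by
        rw [abs_mul, abs_of_nonneg (hp i hi)]
        exact mul_le_mul_of_nonneg_left (h i hi) (hp i hi)
    _ = C := by rw [← sum_mul, hp_sum, one_mul]

lemma existsUnique_fixed_of_norm_sub_le {E : Type*} [NormedAddCommGroup E] [CompleteSpace E]
    {f : E → E} {K : ℝ} (hK0 : 0 ≤ K) (hK1 : K < 1) (hf : ∀ x y, ‖f x - f y‖ ≤ K * ‖x - y‖) :
    ∃! x, f x = x := by
  lift K to NNReal using hK0
  have hc : ContractingWith K f :=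
    ⟨by exact_mod_cast hK1, LipschitzWith.of_dist_le_mul fun x y => by
      simpa only [dist_eq_norm] using hf x y⟩
  exact ⟨hc.fixedPoint f, hc.fixedPoint_isFixedPt, fun y hy => hc.fixedPoint_unique hy⟩

theorem prospect_operator_lipschitz_general
    (S A : Type) [Fintype S] [Fintype A] [Nonempty A]
    (α Lu : ℝ) (hα0 : 0 < α) (hLu : 0 ≤ Lu)
    (k : S × A → ℝ)
    (p : S → A → S → ℝ)
    (hp_nonneg : ∀ i v j, 0 ≤ p i v j)
    (hp_sum : ∀ i v, ∑ j, p i v j = 1)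
    (u : ℝ → ℝ) (hu : ∀ a b : ℝ, |u a - u b| ≤ Lu * |a - b|)
    (F : (S × A → ℝ) → (S × A → ℝ))
    (hF : ∀ x iv, F x iv = k iv + α * ∑ j, p iv.1 iv.2 j * u (⨆ w : A, x (j, w))) :
    (∀ x y : S × A → ℝ, ‖F x - F y‖ ≤ α * Lu * ‖x - y‖) ∧
    (Lu < 1 / α → ∃! Qstar : S × A → ℝ, F Qstar = Qstar) := by
  have hlip : ∀ x y : S × A → ℝ, ‖F x - F y‖ ≤ α * Lu * ‖x - y‖ := by
    intro x y
    refine (pi_norm_le_iff_of_nonneg (by positivity)).2 fun iv => ?_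
    rw [Real.norm_eq_abs, Pi.sub_apply, hF, hF, add_sub_add_left_eq_sub, ← mul_sub, abs_mul,
      abs_of_pos hα0, mul_assoc]
    refine mul_le_mul_of_nonneg_left (abs_sum_mul_sub_sum_mul_le _ (fun j _ => hp_nonneg _ _ j)
      (hp_sum _ _) fun j _ => ?_) hα0.le
    exact (hu _ _).trans
      (mul_le_mul_of_nonneg_left (abs_ciSup_apply_sub_ciSup_apply_le_norm x y j) hLu)
  refine ⟨hlip, fun hLuα => existsUnique_fixed_of_norm_sub_le (by positivity) ?_ hlip⟩
  rwa [lt_div_iff₀ hα0, mul_comm] at hLuα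

theorem prospect_operator_lipschitz
    (S A : Type) [Fintype S] [Fintype A] [Nonempty S] [Nonempty A]
    (α Lu : ℝ) (hα0 : 0 < α) (hα1 : α < 1) (hLu : 0 ≤ Lu)
    (k : S × A → ℝ) (hk : ∀ iv, 0 ≤ k iv)
    (p : S → A → S → ℝ)
    (hp_nonneg : ∀ i v j, 0 ≤ p i v j)
    (hp_sum : ∀ i v, ∑ j, p i v j = 1)
    (u : ℝ → ℝ) (hu : ∀ a b : ℝ, |u a - u b| ≤ Lu * |a - b|)
    (F : (S × A → ℝ) → (S × A → ℝ))
    (hF : ∀ x iv, F x iv = k iv + α * ∑ j, p iv.1 iv.2 j * u (⨆ w : A, x (j, w))) :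
    (∀ x y : S × A → ℝ, ‖F x - F y‖ ≤ α * Lu * ‖x - y‖) ∧
    (Lu < 1 / α → ∃! Qstar : S × A → ℝ, F Qstar = Qstar) :=
  prospect_operator_lipschitz_general S A α Lu hα0 hLu k p hp_nonneg hp_sum u hu F hF
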